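/- arXiv:2411.11728 — 4 statements merged into one kernel-verified Lean document; each statement's English description precedes it below -/
import Mathlib

section
/- Let U, Û ∈ ℝ^{n×r} have orthonormal columns and let U^T Û = W₁ D_U W₂^T be a singular value decomposition with W₁, W₂ ∈ O(r). Define W_U = W₁ W₂^T. Then ‖U^T Û − W_U‖ ≤ ‖sin Θ(Û,U)‖². -/
open Matrix Real

noncomputable def specNorm {m n : ℕ} (A : Matrix (Fin m) (Fin n) ℝ) : ℝ :=
  ‖(Matrix.toEuclideanLin A).toContinuousLinearMap‖

noncomputable def frobNorm {m n : ℕ} (A : Matrix (Fin m) (Fin n) ℝ) : ℝ :=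
  Real.sqrt (∑ i, ∑ j, (A i j) ^ 2)

noncomputable def norm2inf {m n : ℕ} (A : Matrix (Fin m) (Fin n) ℝ) : ℝ :=
  ⨆ i, Real.sqrt (∑ j, (A i j) ^ 2)

noncomputable def norm1inf {m n : ℕ} (A : Matrix (Fin m) (Fin n) ℝ) : ℝ :=
  ⨆ i, ∑ j, |A i j|

def IsOrthoMat {r : ℕ} (W : Matrix (Fin r) (Fin r) ℝ) : Prop := Wᵀ * W = 1 ∧ W * Wᵀ = 1

open scoped Matrix.Norms.L2Operator

lemma specNorm_eq_l2 {m n : ℕ} (A : Matrix (Fin m) (Fin n) ℝ) : specNorm A = ‖A‖ := rfl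

lemma ortho_norm_le_one {r : ℕ} {W : Matrix (Fin r) (Fin r) ℝ} (h : Wᵀ * W = 1) :
    ‖W‖ ≤ 1 := by
  have hct : Wᴴ = Wᵀ := by
    ext i j; simp [Matrix.conjTranspose_apply]
  have h2 : ‖W‖ * ‖W‖ = ‖Wᴴ * W‖ := (Matrix.l2_opNorm_conjTranspose_mul_self W).symm
  rw [hct, h] at h2
  have h1 : ‖(1 : Matrix (Fin r) (Fin r) ℝ)‖ ≤ 1 := by
    rw [Matrix.cstar_norm_def, _root_.map_one]
    exact ContinuousLinearMap.norm_id_le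
  nlinarith [norm_nonneg W]

lemma diag_norm_le {r : ℕ} (d : Fin r → ℝ) (c : ℝ) (hc : 0 ≤ c) (h : ∀ i, |d i| ≤ c) :
    ‖Matrix.diagonal d‖ ≤ c := by
  rw [Matrix.l2_opNorm_def]
  apply ContinuousLinearMap.opNorm_le_bound _ hc
  intro x
  have hx : ∀ i, ((Matrix.toEuclideanLin (Matrix.diagonal d)) x) i = d i * x i := by
    intro i
    simp [Matrix.toEuclideanLin_apply, Matrix.mulVec_diagonal]
  have hle : ‖(Matrix.toEuclideanLin (Matrix.diagonal d)) x‖ ≤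
      Real.sqrt (c ^ 2 * ∑ i, (x i) ^ 2) := by
    rw [EuclideanSpace.norm_eq]
    apply Real.sqrt_le_sqrt
    rw [Finset.mul_sum]
    apply Finset.sum_le_sum
    intro i _
    rw [hx i]
    have := h i
    have : (d i) ^ 2 ≤ c ^ 2 := by nlinarith [abs_nonneg (d i), sq_abs (d i)]
    simp only [Real.norm_eq_abs, sq_abs]
    nlinarith [sq_nonneg (x i)]
  calc ‖(Matrix.toEuclideanLin (Matrix.diagonal d)).toContinuousLinearMap x‖
      ≤ Real.sqrt (c ^ 2 * ∑ i, (x i) ^ 2) := hle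
    _ = c * ‖x‖ := by
        rw [Real.sqrt_mul (sq_nonneg c), Real.sqrt_sq hc, EuclideanSpace.norm_eq]
        simp [sq_abs]

lemma le_diag_norm {r : ℕ} (d : Fin r → ℝ) (i : Fin r) : |d i| ≤ ‖Matrix.diagonal d‖ := by
  rw [Matrix.l2_opNorm_def]
  have key : (Matrix.toEuclideanLin (Matrix.diagonal d)) (EuclideanSpace.single i (1 : ℝ)) =
      EuclideanSpace.single i (d i) := by
    ext j
    simp only [Matrix.toEuclideanLin_apply, EuclideanSpace.single_apply]
    show (Matrix.diagonal d *ᵥ _) j = _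
    rw [Matrix.mulVec_diagonal]
    show d j * (EuclideanSpace.single i (1:ℝ)) j = _
    rw [EuclideanSpace.single_apply]
    split <;> simp_all
  have h := ((Matrix.toEuclideanLin (Matrix.diagonal d)).toContinuousLinearMap).le_opNorm
    (EuclideanSpace.single i (1 : ℝ))
  have hv : ‖(Matrix.toEuclideanLin (Matrix.diagonal d)).toContinuousLinearMap
      (EuclideanSpace.single i (1 : ℝ))‖ = |d i| := by
    show ‖(Matrix.toEuclideanLin (Matrix.diagonal d)) (EuclideanSpace.single i (1 : ℝ))‖ = |d i|
    rw [key, EuclideanSpace.norm_single, Real.norm_eq_abs]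
  rw [hv, EuclideanSpace.norm_single, norm_one, mul_one] at h
  exact h

/-- With `W_U = W₁ W₂ᵀ` from the SVD `Uᵀ Û = W₁ D_U W₂ᵀ`,
`‖Uᵀ Û − W_U‖ ≤ ‖sin Θ(Û,U)‖²`. -/
theorem stmt4 {n r : ℕ}
    (U Uh : Matrix (Fin n) (Fin r) ℝ)
    (hU : Uᵀ * U = 1) (hUh : Uhᵀ * Uh = 1)
    (θ : Fin r → ℝ) (hθ : ∀ i, θ i ∈ Set.Icc 0 (π / 2)) (hmono : Monotone θ)
    (W₁ W₂ : Matrix (Fin r) (Fin r) ℝ) (hW₁ : IsOrthoMat W₁) (hW₂ : IsOrthoMat W₂)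
    (hsvd : Uᵀ * Uh = W₁ * Matrix.diagonal (fun i => Real.cos (θ i)) * W₂ᵀ)
 :
    specNorm (Uᵀ * Uh - W₁ * W₂ᵀ) ≤
      specNorm (Matrix.diagonal fun i => Real.sin (θ i)) ^ 2 := by
  set S : ℝ := specNorm (Matrix.diagonal fun i => Real.sin (θ i)) with hS
  have hS0 : 0 ≤ S := by rw [hS, specNorm_eq_l2]; exact norm_nonneg _
  -- each sin θ i ≤ S
  have hsinS : ∀ i, Real.sin (θ i) ≤ S := fun i => by
    have := le_diag_norm (fun i => Real.sin (θ i)) i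
    rw [← specNorm_eq_l2, ← hS] at this
    exact le_trans (le_abs_self _) this
  -- rewrite the difference
  have hdiff : Uᵀ * Uh - W₁ * W₂ᵀ =
      W₁ * Matrix.diagonal (fun i => Real.cos (θ i) - 1) * W₂ᵀ := by
    rw [hsvd]
    have : Matrix.diagonal (fun i => Real.cos (θ i) - 1) =
        Matrix.diagonal (fun i => Real.cos (θ i)) - 1 := by
      rw [← Matrix.diagonal_one, Matrix.diagonal_sub]
    rw [this]
    noncomm_ring
  rw [hdiff, specNorm_eq_l2]
  have hW₂t : ‖W₂ᵀ‖ ≤ 1 := ortho_norm_le_one (by rw [Matrix.transpose_transpose]; exact hW₂.2)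
  have hW₁n : ‖W₁‖ ≤ 1 := ortho_norm_le_one hW₁.1
  have hEd : ‖Matrix.diagonal (fun i => Real.cos (θ i) - 1)‖ ≤ S ^ 2 := by
    apply diag_norm_le _ _ (by positivity)
    intro i
    obtain ⟨h0, h1⟩ := hθ i
    have hcos0 : 0 ≤ Real.cos (θ i) :=
      Real.cos_nonneg_of_mem_Icc ⟨by linarith [Real.pi_pos], h1⟩
    have hcos1 : Real.cos (θ i) ≤ 1 := Real.cos_le_one _
    have hsin0 : 0 ≤ Real.sin (θ i) := Real.sin_nonneg_of_nonneg_of_le_pi h0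
      (by linarith [Real.pi_pos])
    have hpyth : Real.sin (θ i) ^ 2 + Real.cos (θ i) ^ 2 = 1 := Real.sin_sq_add_cos_sq _
    have hSi := hsinS i
    rw [abs_sub_comm, abs_of_nonneg (by linarith)]
    nlinarith
  calc ‖W₁ * Matrix.diagonal (fun i => Real.cos (θ i) - 1) * W₂ᵀ‖
      ≤ ‖W₁ * Matrix.diagonal (fun i => Real.cos (θ i) - 1)‖ * ‖W₂ᵀ‖ :=
        Matrix.l2_opNorm_mul _ _
    _ ≤ ‖W₁‖ * ‖Matrix.diagonal (fun i => Real.cos (θ i) - 1)‖ * ‖W₂ᵀ‖ := by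
        gcongr
        exact Matrix.l2_opNorm_mul _ _
    _ ≤ 1 * (S ^ 2) * 1 := by
        gcongr <;> first | exact hW₁n | exact hEd | exact hW₂t
    _ = S ^ 2 := by ring
end

section
/- Let Y, Ŷ ∈ ℝ^{n×n} be symmetric, E = Ŷ − Y, with eigendecompositions Y = UΛU^T + U⊥Λ⊥U⊥^T and Ŷ = ÛΛ̂Û^T + Û⊥Λ̂⊥Û⊥^T where U, Û ∈ ℝ^{n×r} have orthonormal columns. Define W_U = W₁W₂^T from the SVD U^TÛ = W₁D_UW₂^T. Then the identity Û − U W_U = (I − UU^T) E U W_U Λ̂⁻¹ + (I − UU^T) E (Û − U W_U) Λ̂⁻¹ + (I − UU^T) Y (Û − U U^T Û) Λ̂⁻¹ + U (U^T Û − W_U) holds, provided Λ̂ is invertible. -/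
open Matrix Real

/-- The Cape–Tang–Priebe four-term expansion of `Û − U W_U` for symmetric `Y, Ŷ`. -/
theorem stmt13 {n r : ℕ}
    (Y Yh E : Matrix (Fin n) (Fin n) ℝ) (hE : E = Yh - Y)
    (U Uh : Matrix (Fin n) (Fin r) ℝ) (Up Uhp : Matrix (Fin n) (Fin (n - r)) ℝ)
    (lam lamh : Fin r → ℝ) (lamp lamhp : Fin (n - r) → ℝ)
    (hU : Uᵀ * U = 1) (hUh : Uhᵀ * Uh = 1)
    (hUp : Upᵀ * Up = 1) (hUhp : Uhpᵀ * Uhp = 1)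
    (hmix : Uᵀ * Up = 0) (hmixh : Uhᵀ * Uhp = 0)
    (hY : Y = U * Matrix.diagonal lam * Uᵀ + Up * Matrix.diagonal lamp * Upᵀ)
    (hYh : Yh = Uh * Matrix.diagonal lamh * Uhᵀ + Uhp * Matrix.diagonal lamhp * Uhpᵀ)
    (hinv : ∀ i, lamh i ≠ 0)
    (W₁ W₂ : Matrix (Fin r) (Fin r) ℝ) (hW₁ : IsOrthoMat W₁) (hW₂ : IsOrthoMat W₂)
    (D : Fin r → ℝ) (hD0 : ∀ i, 0 ≤ D i)
    (hsvd : Uᵀ * Uh = W₁ * Matrix.diagonal D * W₂ᵀ) :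
    Uh - U * (W₁ * W₂ᵀ) =
      (1 - U * Uᵀ) * E * U * (W₁ * W₂ᵀ) * Matrix.diagonal (fun i => (lamh i)⁻¹)
      + (1 - U * Uᵀ) * E * (Uh - U * (W₁ * W₂ᵀ)) * Matrix.diagonal (fun i => (lamh i)⁻¹)
      + (1 - U * Uᵀ) * Y * (Uh - U * (Uᵀ * Uh)) * Matrix.diagonal (fun i => (lamh i)⁻¹)
      + U * (Uᵀ * Uh - W₁ * W₂ᵀ) := by

  have hUpU : Upᵀ * U = 0 := by
    have := congrArg Matrix.transpose hmix
    simpa [Matrix.transpose_mul] using this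
  have hUhpUh : Uhpᵀ * Uh = 0 := by
    have := congrArg Matrix.transpose hmixh
    simpa [Matrix.transpose_mul] using this
  have hYU : Y * U = U * Matrix.diagonal lam := by
    rw [hY]
    simp [Matrix.add_mul, Matrix.mul_assoc, hU, hUpU]
  have hYhUh : Yh * Uh = Uh * Matrix.diagonal lamh := by
    rw [hYh]
    simp [Matrix.add_mul, Matrix.mul_assoc, hUh, hUhpUh]
  have hDi : Matrix.diagonal lamh * Matrix.diagonal (fun i => (lamh i)⁻¹) = 1 := by
    rw [Matrix.diagonal_mul_diagonal]
    have : (fun i => lamh i * (lamh i)⁻¹) = fun _ => (1:ℝ) := by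
      funext i; exact mul_inv_cancel₀ (hinv i)
    rw [this, Matrix.diagonal_one]
  have h1 : ∀ X : Matrix (Fin r) (Fin r) ℝ, Yh * (Uh * X) = Uh * (Matrix.diagonal lamh * X) := by
    intro X; rw [← Matrix.mul_assoc, hYhUh, Matrix.mul_assoc]
  have h2 : ∀ X : Matrix (Fin r) (Fin r) ℝ, Y * (U * X) = U * (Matrix.diagonal lam * X) := by
    intro X; rw [← Matrix.mul_assoc, hYU, Matrix.mul_assoc]
  have h3 : ∀ X : Matrix (Fin r) (Fin r) ℝ, Uᵀ * (U * X) = X := by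
    intro X; rw [← Matrix.mul_assoc, hU, Matrix.one_mul]
  subst hE
  simp only [Matrix.sub_mul, Matrix.mul_sub, Matrix.one_mul, Matrix.mul_one, Matrix.mul_assoc,
    h1, h2, h3, hDi, hYhUh]
  abel
end

section
/- Let U, Û ∈ ℝ^{n×r} have orthonormal columns with ‖sin Θ(Û,U)‖ ≤ 1/√2, and let W_U be the Procrustes alignment from the SVD of U^T Û. Then ‖Û Û^T U − U‖_{2,∞} ≤ 4·‖Û − U W_U‖_{2,∞} + C·‖sin Θ(Û,U)‖²·‖U‖_{2,∞} for an absolute constant C (one may take C = 8). -/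
open Matrix Real

namespace Stmt15Aux

noncomputable def enorm {r : ℕ} (v : Fin r → ℝ) : ℝ :=
  ‖(WithLp.equiv 2 (Fin r → ℝ)).symm v‖

lemma enorm_eq {r : ℕ} (v : Fin r → ℝ) : enorm v = Real.sqrt (∑ j, v j ^ 2) := by
  simp [enorm, EuclideanSpace.norm_eq, Real.norm_eq_abs, sq_abs]

lemma enorm_nonneg {r : ℕ} (v : Fin r → ℝ) : 0 ≤ enorm v := norm_nonneg _

lemma enorm_add_le {r : ℕ} (v w : Fin r → ℝ) : enorm (v + w) ≤ enorm v + enorm w := by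
  simpa [enorm, WithLp.toLp_add] using
    norm_add_le ((WithLp.equiv 2 (Fin r → ℝ)).symm v) ((WithLp.equiv 2 (Fin r → ℝ)).symm w)

lemma specNorm_nonneg {m n : ℕ} (A : Matrix (Fin m) (Fin n) ℝ) : 0 ≤ specNorm A :=
  norm_nonneg _

lemma enorm_mulVec_le {m r : ℕ} (B : Matrix (Fin m) (Fin r) ℝ) (v : Fin r → ℝ) :
    enorm (B *ᵥ v) ≤ specNorm B * enorm v := by
  have h := (Matrix.toEuclideanLin B).toContinuousLinearMap.le_opNorm
    ((WithLp.equiv 2 (Fin r → ℝ)).symm v)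
  simpa [specNorm, enorm, Matrix.toEuclideanLin_apply_piLp_toLp] using h

lemma specNorm_le {m r : ℕ} (B : Matrix (Fin m) (Fin r) ℝ) (c : ℝ) (hc : 0 ≤ c)
    (h : ∀ v : Fin r → ℝ, enorm (B *ᵥ v) ≤ c * enorm v) : specNorm B ≤ c := by
  refine ContinuousLinearMap.opNorm_le_bound _ hc fun x => ?_
  have h2 := h ((WithLp.equiv 2 (Fin r → ℝ)) x)
  simpa [enorm, Matrix.toEuclideanLin_apply_piLp_toLp, Matrix.toEuclideanLin_apply] using h2

lemma specNorm_mul_le {m k r : ℕ} (A : Matrix (Fin m) (Fin k) ℝ) (B : Matrix (Fin k) (Fin r) ℝ) :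
    specNorm (A * B) ≤ specNorm A * specNorm B := by
  refine specNorm_le _ _ (mul_nonneg (specNorm_nonneg A) (specNorm_nonneg B)) fun v => ?_
  calc enorm ((A * B) *ᵥ v) = enorm (A *ᵥ (B *ᵥ v)) := by rw [Matrix.mulVec_mulVec]
    _ ≤ specNorm A * enorm (B *ᵥ v) := enorm_mulVec_le A (B *ᵥ v)
    _ ≤ specNorm A * (specNorm B * enorm v) := by
        have := enorm_mulVec_le B v
        exact mul_le_mul_of_nonneg_left this (specNorm_nonneg A)
    _ = specNorm A * specNorm B * enorm v := by ring

lemma enorm_mulVec_ortho {r : ℕ} (W : Matrix (Fin r) (Fin r) ℝ) (hW : Wᵀ * W = 1)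
    (v : Fin r → ℝ) : enorm (W *ᵥ v) = enorm v := by
  have key : (W *ᵥ v) ⬝ᵥ (W *ᵥ v) = v ⬝ᵥ v := by
    rw [Matrix.dotProduct_mulVec, ← Matrix.vecMul_transpose, Matrix.vecMul_vecMul, hW,
      Matrix.vecMul_one]
  rw [enorm_eq, enorm_eq]
  congr 1
  have h1 : ∑ j, (W *ᵥ v) j ^ 2 = (W *ᵥ v) ⬝ᵥ (W *ᵥ v) := by
    simp [dotProduct, pow_two]
  have h2 : ∑ j, v j ^ 2 = v ⬝ᵥ v := by simp [dotProduct, pow_two]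
  rw [h1, h2, key]

lemma specNorm_ortho_le {r : ℕ} (W : Matrix (Fin r) (Fin r) ℝ) (hW : Wᵀ * W = 1) :
    specNorm W ≤ 1 := by
  refine specNorm_le _ _ zero_le_one fun v => ?_
  rw [enorm_mulVec_ortho W hW v, one_mul]

lemma specNorm_diagonal_le {r : ℕ} (d : Fin r → ℝ) (c : ℝ) (hc : 0 ≤ c)
    (h : ∀ i, |d i| ≤ c) : specNorm (Matrix.diagonal d) ≤ c := by
  refine specNorm_le _ _ hc fun v => ?_
  rw [enorm_eq, enorm_eq, ← Real.sqrt_sq hc, ← Real.sqrt_mul (by positivity)]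
  apply Real.sqrt_le_sqrt
  rw [Finset.mul_sum]
  refine Finset.sum_le_sum fun j _ => ?_
  have hj : (Matrix.diagonal d *ᵥ v) j = d j * v j := by
    simp [Matrix.mulVec_diagonal]
  rw [hj]
  have h4 : d j ^ 2 ≤ c ^ 2 := by nlinarith [sq_abs (d j), abs_nonneg (d j), h j]
  calc (d j * v j) ^ 2 = d j ^ 2 * v j ^ 2 := by ring
    _ ≤ c ^ 2 * v j ^ 2 := mul_le_mul_of_nonneg_right h4 (sq_nonneg _)

lemma abs_le_specNorm_diagonal {r : ℕ} (d : Fin r → ℝ) (i : Fin r) :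
    |d i| ≤ specNorm (Matrix.diagonal d) := by
  have h := enorm_mulVec_le (Matrix.diagonal d) (Pi.single i 1)
  have h1 : Matrix.diagonal d *ᵥ Pi.single i 1 = Pi.single i (d i) := by
    funext j
    rcases eq_or_ne j i with rfl | hji
    · simp [Matrix.mulVec_diagonal]
    · simp [Matrix.mulVec_diagonal, Pi.single_eq_of_ne hji]
  have h2 : enorm (Pi.single i (d i) : Fin r → ℝ) = |d i| := by
    rw [enorm_eq]
    rw [Finset.sum_eq_single i]
    · rw [Pi.single_eq_same]; exact Real.sqrt_sq_eq_abs _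
    · intro j _ hji; simp [Pi.single_eq_of_ne hji]
    · intro hi; exact absurd (Finset.mem_univ i) hi
  have h3 : enorm (Pi.single i (1:ℝ) : Fin r → ℝ) = 1 := by
    have := h2  -- not used
    rw [enorm_eq, Finset.sum_eq_single i]
    · simp
    · intro j _ hji; simp [Pi.single_eq_of_ne hji]
    · intro hi; exact absurd (Finset.mem_univ i) hi
  rw [h1, h2, h3, mul_one] at h
  exact h

lemma le_norm2inf {m r : ℕ} (A : Matrix (Fin m) (Fin r) ℝ) (i : Fin m) :
    Real.sqrt (∑ j, A i j ^ 2) ≤ norm2inf A := by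
  exact le_ciSup (f := fun i => Real.sqrt (∑ j, A i j ^ 2))
    (Set.Finite.bddAbove (Set.finite_range _)) i

lemma norm2inf_nonneg {m r : ℕ} (A : Matrix (Fin m) (Fin r) ℝ) : 0 ≤ norm2inf A :=
  Real.iSup_nonneg fun _ => Real.sqrt_nonneg _

lemma norm2inf_add_le {m r : ℕ} (A B : Matrix (Fin m) (Fin r) ℝ) :
    norm2inf (A + B) ≤ norm2inf A + norm2inf B := by
  refine Real.iSup_le (fun i => ?_) (add_nonneg (norm2inf_nonneg A) (norm2inf_nonneg B))
  have h1 : Real.sqrt (∑ j, (A + B) i j ^ 2) = enorm ((A i) + (B i)) := by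
    rw [enorm_eq]; rfl
  rw [h1]
  calc enorm (A i + B i) ≤ enorm (A i) + enorm (B i) := enorm_add_le _ _
    _ ≤ norm2inf A + norm2inf B := by
        apply add_le_add
        · rw [enorm_eq]; exact le_norm2inf A i
        · rw [enorm_eq]; exact le_norm2inf B i

lemma norm2inf_mul_transpose_le {m k r : ℕ} (A : Matrix (Fin m) (Fin r) ℝ)
    (B : Matrix (Fin k) (Fin r) ℝ) :
    norm2inf (A * Bᵀ) ≤ norm2inf A * specNorm B := by
  refine Real.iSup_le (fun i => ?_)
    (mul_nonneg (norm2inf_nonneg A) (specNorm_nonneg B))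
  have hrow : ∀ j, (A * Bᵀ) i j = (B *ᵥ (A i)) j := by
    intro j
    simp [Matrix.mul_apply, Matrix.mulVec, dotProduct, mul_comm]
  have h1 : Real.sqrt (∑ j, (A * Bᵀ) i j ^ 2) = enorm (B *ᵥ (A i)) := by
    rw [enorm_eq]
    congr 1
    exact Finset.sum_congr rfl fun j _ => by rw [hrow j]
  rw [h1]
  calc enorm (B *ᵥ (A i)) ≤ specNorm B * enorm (A i) := enorm_mulVec_le B (A i)
    _ ≤ specNorm B * norm2inf A := by
        apply mul_le_mul_of_nonneg_left _ (specNorm_nonneg B)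
        rw [enorm_eq]; exact le_norm2inf A i
    _ = norm2inf A * specNorm B := mul_comm _ _

end Stmt15Aux

open Stmt15Aux

/-- If `‖sin Θ(Û,U)‖ ≤ 1/√2` and `W_U = W₁ W₂ᵀ` is the Procrustes alignment, then
`‖Û Ûᵀ U − U‖_{2,∞} ≤ 4 ‖Û − U W_U‖_{2,∞} + 8 ‖sin Θ(Û,U)‖² ‖U‖_{2,∞}`. -/
theorem stmt15 {n r : ℕ}
    (U Uh : Matrix (Fin n) (Fin r) ℝ)
    (hU : Uᵀ * U = 1) (hUh : Uhᵀ * Uh = 1)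
    (θ : Fin r → ℝ) (hθ : ∀ i, θ i ∈ Set.Icc 0 (π / 2)) (hmono : Monotone θ)
    (W₁ W₂ : Matrix (Fin r) (Fin r) ℝ) (hW₁ : IsOrthoMat W₁) (hW₂ : IsOrthoMat W₂)
    (hsvd : Uᵀ * Uh = W₁ * Matrix.diagonal (fun i => Real.cos (θ i)) * W₂ᵀ)
    (hsin : specNorm (Matrix.diagonal fun i => Real.sin (θ i)) ≤ 1 / Real.sqrt 2) :
    norm2inf (Uh * Uhᵀ * U - U) ≤
      4 * norm2inf (Uh - U * (W₁ * W₂ᵀ))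
      + 8 * specNorm (Matrix.diagonal fun i => Real.sin (θ i)) ^ 2 * norm2inf U := by
  set Dc : Matrix (Fin r) (Fin r) ℝ := Matrix.diagonal (fun i => Real.cos (θ i)) with hDc
  set M : Matrix (Fin r) (Fin r) ℝ := W₁ * Dc * W₂ᵀ with hM
  set W : Matrix (Fin r) (Fin r) ℝ := W₁ * W₂ᵀ with hW
  set C : Matrix (Fin r) (Fin r) ℝ :=
    W₁ * Matrix.diagonal (fun i => Real.cos (θ i) - 1) * W₁ᵀ with hC
  set s : ℝ := specNorm (Matrix.diagonal fun i => Real.sin (θ i)) with hs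
  -- Uhᵀ * U = Mᵀ
  have hUhU : Uhᵀ * U = Mᵀ := by
    have := congrArg Matrix.transpose hsvd
    simpa [Matrix.transpose_mul, Matrix.mul_assoc] using this
  -- W * Mᵀ = W₁ * Dc * W₁ᵀ
  have hMT : Mᵀ = W₂ * Dc * W₁ᵀ := by
    simp [hM, Matrix.transpose_mul, Matrix.diagonal_transpose, hDc, Matrix.mul_assoc]
  have hWMT : W * Mᵀ = W₁ * Dc * W₁ᵀ := by
    rw [hMT, hW]
    calc W₁ * W₂ᵀ * (W₂ * Dc * W₁ᵀ)
        = W₁ * ((W₂ᵀ * W₂) * (Dc * W₁ᵀ)) := by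
          simp only [Matrix.mul_assoc]
      _ = W₁ * Dc * W₁ᵀ := by rw [hW₂.1, Matrix.one_mul, Matrix.mul_assoc]
  -- Cᵀ = C and C = W*Mᵀ - 1
  have hCT : Cᵀ = C := by
    simp [hC, Matrix.transpose_mul, Matrix.diagonal_transpose, Matrix.mul_assoc]
  have hCeq : C = W * Mᵀ - 1 := by
    rw [hWMT, hC]
    have : Matrix.diagonal (fun i => Real.cos (θ i) - 1)
        = Dc - (1 : Matrix (Fin r) (Fin r) ℝ) := by
      rw [hDc, ← Matrix.diagonal_one, Matrix.diagonal_sub]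
    rw [this, Matrix.mul_sub, Matrix.sub_mul, Matrix.mul_one, hW₁.2]
  -- decomposition
  have hdecomp : Uh * Uhᵀ * U - U = (Uh - U * W) * Mᵀ + U * Cᵀ := by
    rw [hCT, hCeq, Matrix.mul_assoc, hUhU, Matrix.sub_mul, Matrix.mul_sub, Matrix.mul_one,
      Matrix.mul_assoc, Matrix.mul_assoc]
    abel
  -- spectral norm bounds
  have hs0 : 0 ≤ s := specNorm_nonneg _
  have hsinabs : ∀ i, |Real.sin (θ i)| ≤ s := fun i => by
    rw [hs]; exact abs_le_specNorm_diagonal (fun i => Real.sin (θ i)) i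
  have hcosbound : ∀ i, |Real.cos (θ i) - 1| ≤ s ^ 2 := by
    intro i
    obtain ⟨h0, h1⟩ := hθ i
    have hcos0 : 0 ≤ Real.cos (θ i) :=
      Real.cos_nonneg_of_mem_Icc ⟨by linarith [Real.pi_pos], h1⟩
    have hcos1 : Real.cos (θ i) ≤ 1 := Real.cos_le_one _
    have hpyth : Real.sin (θ i) ^ 2 + Real.cos (θ i) ^ 2 = 1 := Real.sin_sq_add_cos_sq _
    have hsle : Real.sin (θ i) ^ 2 ≤ s ^ 2 := by
      have := hsinabs i
      nlinarith [abs_nonneg (Real.sin (θ i)), sq_abs (Real.sin (θ i))]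
    rw [abs_sub_comm, abs_of_nonneg (by linarith)]
    nlinarith
  have hM1 : specNorm M ≤ 1 := by
    calc specNorm M ≤ specNorm (W₁ * Dc) * specNorm W₂ᵀ := specNorm_mul_le _ _
      _ ≤ (specNorm W₁ * specNorm Dc) * specNorm W₂ᵀ := by
          apply mul_le_mul_of_nonneg_right (specNorm_mul_le _ _) (specNorm_nonneg _)
      _ ≤ (1 * 1) * 1 := by
          have h1 : specNorm W₁ ≤ 1 := specNorm_ortho_le _ hW₁.1
          have h2 : specNorm Dc ≤ 1 := specNorm_diagonal_le _ 1 zero_le_one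
            fun i => abs_cos_le_one _
          have h3 : specNorm W₂ᵀ ≤ 1 := specNorm_ortho_le _ (by
            rw [Matrix.transpose_transpose]; exact hW₂.2)
          have na := specNorm_nonneg Dc
          have nb := specNorm_nonneg W₂ᵀ
          exact mul_le_mul (mul_le_mul h1 h2 na zero_le_one) h3 nb (by norm_num)
      _ = 1 := by ring
  have hC2 : specNorm C ≤ s ^ 2 := by
    calc specNorm C
        ≤ specNorm (W₁ * Matrix.diagonal (fun i => Real.cos (θ i) - 1)) * specNorm W₁ᵀ :=
          specNorm_mul_le _ _
      _ ≤ (specNorm W₁ * specNorm (Matrix.diagonal (fun i => Real.cos (θ i) - 1)))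
            * specNorm W₁ᵀ := by
          apply mul_le_mul_of_nonneg_right (specNorm_mul_le _ _) (specNorm_nonneg _)
      _ ≤ (1 * s ^ 2) * 1 := by
          have h1 : specNorm W₁ ≤ 1 := specNorm_ortho_le _ hW₁.1
          have h2 : specNorm (Matrix.diagonal (fun i => Real.cos (θ i) - 1)) ≤ s ^ 2 :=
            specNorm_diagonal_le _ _ (by positivity) hcosbound
          have h3 : specNorm W₁ᵀ ≤ 1 := specNorm_ortho_le _ (by
            rw [Matrix.transpose_transpose]; exact hW₁.2)
          have n2 := specNorm_nonneg (Matrix.diagonal (fun i => Real.cos (θ i) - 1))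
          have n3 := specNorm_nonneg W₁ᵀ
          exact mul_le_mul (mul_le_mul h1 h2 n2 zero_le_one) h3 n3 (by positivity)
      _ = s ^ 2 := by ring
  -- put things together
  have key : norm2inf (Uh * Uhᵀ * U - U)
      ≤ norm2inf (Uh - U * W) * 1 + norm2inf U * s ^ 2 := by
    calc norm2inf (Uh * Uhᵀ * U - U)
        = norm2inf ((Uh - U * W) * Mᵀ + U * Cᵀ) := by rw [hdecomp]
      _ ≤ norm2inf ((Uh - U * W) * Mᵀ) + norm2inf (U * Cᵀ) := norm2inf_add_le _ _
      _ ≤ norm2inf (Uh - U * W) * specNorm M + norm2inf U * specNorm C :=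
          add_le_add (norm2inf_mul_transpose_le _ _) (norm2inf_mul_transpose_le _ _)
      _ ≤ norm2inf (Uh - U * W) * 1 + norm2inf U * s ^ 2 := by
          apply add_le_add
          · exact mul_le_mul_of_nonneg_left hM1 (norm2inf_nonneg _)
          · exact mul_le_mul_of_nonneg_left hC2 (norm2inf_nonneg _)
  have ha := norm2inf_nonneg (Uh - U * W)
  have hu := norm2inf_nonneg U
  have hsq : (0:ℝ) ≤ s ^ 2 := sq_nonneg s
  rw [hW] at key ha
  nlinarith [mul_nonneg hu hsq]
end

section
/- Let X = ZΘ where Z ∈ {0,1}^{n×r} is a clustering matrix with cluster sizes n_1,...,n_r (each row of Z has exactly one 1) and Θ ∈ ℝ^{r×m} has rank r. Write the SVD X = UDV^T with U ∈ ℝ^{n×r} having orthonormal columns. Then for rows i, j of U: U(i,:) = U(j,:) whenever z(i) = z(j), and ‖U(i,:) − U(j,:)‖ ≥ √2/√(n_max) whenever z(i) ≠ z(j), where n_max = max_k n_k. -/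
open Matrix Real

/-- Rows of the left singular-vector matrix of `X = Z Θ` (clustering structure):
rows coincide within a cluster, and rows from different clusters are at ℓ₂
distance at least `√2/√(n_max)`. -/
theorem stmt16 {n m r : ℕ} (z : Fin n → Fin r) (Θ : Matrix (Fin r) (Fin m) ℝ)
    (hrank : Θ.rank = r) (hsurj : Function.Surjective z)
    (X : Matrix (Fin n) (Fin m) ℝ)
    (hX : X = (Matrix.of fun i k => if z i = k then (1 : ℝ) else 0) * Θ)
    (U : Matrix (Fin n) (Fin r) ℝ) (V : Matrix (Fin m) (Fin r) ℝ) (d : Fin r → ℝ)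
    (hU : Uᵀ * U = 1) (hV : Vᵀ * V = 1)
    (hsvd : X = U * Matrix.diagonal d * Vᵀ) :
    (∀ i j, z i = z j → ∀ k, U i k = U j k) ∧
    (∀ i j, z i ≠ z j →
      Real.sqrt (∑ k, (U i k - U j k) ^ 2) ≥
        Real.sqrt 2 /
          Real.sqrt ((Finset.univ.sup fun k => (Finset.univ.filter fun i' => z i' = k).card : ℕ) : ℝ)) := by
  set Z : Matrix (Fin n) (Fin r) ℝ := Matrix.of fun i k => if z i = k then (1 : ℝ) else 0 with hZ
  set c : Fin r → ℕ := fun k => (Finset.univ.filter fun i' => z i' = k).card with hc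
  have hcpos : ∀ k, 0 < c k := by
    intro k
    obtain ⟨i, hi⟩ := hsurj k
    exact Finset.card_pos.mpr ⟨i, by simp [hi]⟩
  have hZtZ : Zᵀ * Z = Matrix.diagonal fun k => (c k : ℝ) := by
    ext k l
    simp only [Matrix.mul_apply, Matrix.transpose_apply, hZ, Matrix.of_apply,
      Matrix.diagonal_apply]
    by_cases hkl : k = l
    · subst hkl
      rw [if_pos rfl]
      have he : ∀ x, (if z x = k then (1:ℝ) else 0) * (if z x = k then 1 else 0) =
          if z x = k then 1 else 0 := fun x => by split_ifs <;> simp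
      rw [Finset.sum_congr rfl fun x _ => he x, Finset.sum_boole, hc]
    · rw [if_neg hkl, Finset.sum_eq_zero]
      intro i _
      by_cases h1 : z i = k <;> by_cases h2 : z i = l <;> simp_all
  -- d k ≠ 0
  have hdne : ∀ k, d k ≠ 0 := by
    have h1 : r ≤ X.rank := by
      have : Θ = (Matrix.diagonal fun k => ((c k : ℝ))⁻¹) * Zᵀ * X := by
        rw [hX, ← Matrix.mul_assoc, Matrix.mul_assoc _ Zᵀ Z, hZtZ,
          Matrix.diagonal_mul_diagonal]
        have : (fun k => ((c k : ℝ))⁻¹ * (c k : ℝ)) = fun _ => (1 : ℝ) := by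
          funext k
          exact inv_mul_cancel₀ (by exact_mod_cast (hcpos k).ne')
        rw [this, Matrix.diagonal_one, Matrix.one_mul]
      calc r = Θ.rank := hrank.symm
        _ ≤ X.rank := by rw [this]; exact Matrix.rank_mul_le_right _ _
    have h2 : X.rank ≤ (Matrix.diagonal d).rank := by
      rw [hsvd]
      exact le_trans (Matrix.rank_mul_le_left _ _)
        (Matrix.rank_mul_le_right _ _)
    rw [Matrix.rank_diagonal] at h2
    intro k hk
    have := Fintype.card_subtype_lt (p := fun k => d k ≠ 0) (x := k) (by simp [hk])
    simp only [Fintype.card_fin] at this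
    omega
  -- diagonal d invertible
  have hDinv : Matrix.diagonal d * Matrix.diagonal (fun k => (d k)⁻¹) = 1 := by
    rw [Matrix.diagonal_mul_diagonal]
    have : (fun k => d k * (d k)⁻¹) = fun _ => (1:ℝ) := by
      funext k; exact mul_inv_cancel₀ (hdne k)
    rw [this, Matrix.diagonal_one]
  set M : Matrix (Fin r) (Fin r) ℝ := Θ * V * Matrix.diagonal (fun k => (d k)⁻¹) with hM
  have hUM : U = Z * M := by
    have : Z * M = X * V * Matrix.diagonal (fun k => (d k)⁻¹) := by
      rw [hX, hM]; ring_nf; rw [Matrix.mul_assoc, Matrix.mul_assoc, Matrix.mul_assoc]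
    rw [this, hsvd, Matrix.mul_assoc (U * Matrix.diagonal d) Vᵀ V, hV, Matrix.mul_one,
      Matrix.mul_assoc, hDinv, Matrix.mul_one]
  have hrow : ∀ i k, U i k = M (z i) k := by
    intro i k
    rw [hUM]
    simp [Matrix.mul_apply, hZ, ite_mul, Finset.sum_ite_eq]
  have hgroup : ∀ f : Fin r → ℝ, ∑ i, f (z i) = ∑ k, (c k : ℝ) * f k := by
    intro f
    rw [← Finset.sum_fiberwise_of_maps_to' (fun i _ => Finset.mem_univ (z i)) f]
    refine Finset.sum_congr rfl fun k _ => ?_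
    rw [Finset.sum_const, nsmul_eq_mul, hc]
  set W : Matrix (Fin r) (Fin r) ℝ := Matrix.of fun k a => Real.sqrt (c k) * M k a with hW
  have hWtW : Wᵀ * W = 1 := by
    ext a b
    have h1 : (Uᵀ * U) a b = ∑ k, (c k : ℝ) * (M k a * M k b) := by
      simp only [Matrix.mul_apply, Matrix.transpose_apply]
      rw [Finset.sum_congr rfl fun i (_ : i ∈ Finset.univ) => by rw [hrow i a, hrow i b]]
      exact hgroup fun k => M k a * M k b
    have h2 : (Wᵀ * W) a b = ∑ k, (c k : ℝ) * (M k a * M k b) := by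
      simp only [Matrix.mul_apply, Matrix.transpose_apply, hW, Matrix.of_apply]
      refine Finset.sum_congr rfl fun k _ => ?_
      have hs : Real.sqrt (c k) * Real.sqrt (c k) = (c k : ℝ) :=
        Real.mul_self_sqrt (by positivity)
      linear_combination (M k a * M k b) * hs
    rw [h2, ← h1, hU]
  have hWWt : W * Wᵀ = 1 := mul_eq_one_comm.mp hWtW
  have hMM : ∀ k l, Real.sqrt (c k) * Real.sqrt (c l) * (∑ a, M k a * M l a) =
      if k = l then 1 else 0 := by
    intro k l
    have h := congrFun (congrFun hWWt k) l
    simp only [Matrix.mul_apply, Matrix.transpose_apply, hW, Matrix.of_apply,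
      Matrix.one_apply] at h
    rw [Finset.mul_sum, ← h]
    exact Finset.sum_congr rfl fun a _ => by ring
  have hnorm : ∀ k, ∑ a, M k a * M k a = ((c k : ℝ))⁻¹ := by
    intro k
    have h := hMM k k
    rw [if_pos rfl, Real.mul_self_sqrt (by positivity)] at h
    have hck : (c k : ℝ) ≠ 0 := by exact_mod_cast (hcpos k).ne'
    field_simp at h ⊢
    linarith [h]
  have horth : ∀ k l, k ≠ l → ∑ a, M k a * M l a = 0 := by
    intro k l hkl
    have h := hMM k l
    rw [if_neg hkl] at h
    have h1 : Real.sqrt (c k) ≠ 0 := by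
      rw [Real.sqrt_ne_zero' ]; exact_mod_cast hcpos k
    have h2 : Real.sqrt (c l) ≠ 0 := by
      rw [Real.sqrt_ne_zero' ]; exact_mod_cast hcpos l
    have := mul_eq_zero.mp h
    rcases this with h' | h'
    · exact absurd (mul_eq_zero.mp h') (by push_neg; exact ⟨h1, h2⟩)
    · exact h'
  constructor
  · intro i j hij k
    rw [hrow i k, hrow j k, hij]
  · intro i j hij
    set N : ℕ := Finset.univ.sup (fun k => (Finset.univ.filter fun i' => z i' = k).card)
      with hN
    have hcleN : ∀ k, (c k : ℝ) ≤ (N : ℝ) := by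
      intro k
      exact_mod_cast Finset.le_sup (f := fun k => (Finset.univ.filter fun i' => z i' = k).card)
        (Finset.mem_univ k)
    have hNpos : (0 : ℝ) < (N : ℝ) := lt_of_lt_of_le (by exact_mod_cast hcpos (z i)) (hcleN (z i))
    have hsum : ∑ a, (U i a - U j a) ^ 2 = ((c (z i) : ℝ))⁻¹ + ((c (z j) : ℝ))⁻¹ := by
      have e1 : ∀ a, (U i a - U j a) ^ 2 =
          M (z i) a * M (z i) a + M (z j) a * M (z j) a - 2 * (M (z i) a * M (z j) a) := by
        intro a; rw [hrow i a, hrow j a]; ring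
      calc ∑ a, (U i a - U j a) ^ 2
          = ∑ a, (M (z i) a * M (z i) a) + ∑ a, (M (z j) a * M (z j) a)
              - 2 * ∑ a, M (z i) a * M (z j) a := by
            rw [Finset.mul_sum, ← Finset.sum_add_distrib, ← Finset.sum_sub_distrib]
            exact Finset.sum_congr rfl fun a _ => e1 a
        _ = ((c (z i) : ℝ))⁻¹ + ((c (z j) : ℝ))⁻¹ := by
            rw [hnorm, hnorm, horth _ _ hij]; ring
    have hineq : 2 / (N : ℝ) ≤ ∑ a, (U i a - U j a) ^ 2 := by
      rw [hsum]
      have g1 : (N : ℝ)⁻¹ ≤ ((c (z i) : ℝ))⁻¹ :=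
        inv_anti₀ (by exact_mod_cast hcpos (z i)) (hcleN (z i))
      have g2 : (N : ℝ)⁻¹ ≤ ((c (z j) : ℝ))⁻¹ :=
        inv_anti₀ (by exact_mod_cast hcpos (z j)) (hcleN (z j))
      have : 2 / (N : ℝ) = (N : ℝ)⁻¹ + (N : ℝ)⁻¹ := by ring
      rw [this]; exact add_le_add g1 g2
    calc Real.sqrt 2 / Real.sqrt (N : ℝ) = Real.sqrt (2 / (N : ℝ)) := by
          rw [Real.sqrt_div (by norm_num : (0:ℝ) ≤ 2)]
      _ ≤ Real.sqrt (∑ a, (U i a - U j a) ^ 2) := Real.sqrt_le_sqrt hineq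
end
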